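/- arXiv:2412.02481 — 5 statements merged into one kernel-verified Lean document; each statement's English description precedes it below -/
import Mathlib

section
/- Let G be the group presented by three generators λ₁, λ₂, λ₃ subject to the two relations λ₂λ₃λ₁⁻¹λ₃⁻¹ = e and λ₁λ₃λ₂⁻¹λ₃⁻¹ = e, and let H be the group presented by two generators a, b subject to the single relation abab = baba. Then G and H are isomorphic as groups (an isomorphism is induced by a ↦ λ₁, b ↦ λ₁⁻¹λ₃). -/
/-- Relators of `G`: `λ₂λ₃λ₁⁻¹λ₃⁻¹` and `λ₁λ₃λ₂⁻¹λ₃⁻¹` in the free group on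
three generators `λ₁ = 0`, `λ₂ = 1`, `λ₃ = 2`. -/
def relsG : Set (FreeGroup (Fin 3)) :=
  {FreeGroup.of 1 * FreeGroup.of 2 * (FreeGroup.of 0)⁻¹ * (FreeGroup.of 2)⁻¹,
   FreeGroup.of 0 * FreeGroup.of 2 * (FreeGroup.of 1)⁻¹ * (FreeGroup.of 2)⁻¹}

/-- Relator of `H`: `abab(baba)⁻¹` in the free group on two generators
`a = 0`, `b = 1`. -/
def relsH : Set (FreeGroup (Fin 2)) :=
  {FreeGroup.of 0 * FreeGroup.of 1 * FreeGroup.of 0 * FreeGroup.of 1 *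
    (FreeGroup.of 1 * FreeGroup.of 0 * FreeGroup.of 1 * FreeGroup.of 0)⁻¹}

/-!
The first relation of `G` says `λ₂ = λ₃λ₁λ₃⁻¹`, so `λ₂` can be eliminated, and the second one
then reads `λ₁λ₃² = λ₃²λ₁`. With `a = λ₁` and `b = λ₁⁻¹λ₃`, i.e. `λ₃ = ab`, this is the relation
`a (ab)² = (ab)² a`, which is `abab = baba` multiplied on the left by `a`.
-/

open PresentedGroup

section Braid

variable {M : Type*} [Group M]

theorem braid_iff_commute_mul_sq (a b : M) :
    a * b * a * b = b * a * b * a ↔ Commute a ((a * b) ^ 2) := by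
  rw [Commute, SemiconjBy, sq, show a * b * (a * b) * a = a * (b * a * b * a) by group,
    mul_right_inj, ← mul_assoc]

theorem mul_eq_mul_conj_iff_commute_sq (x z : M) :
    x * z = z * (z * x * z⁻¹) ↔ Commute x (z ^ 2) := by
  rw [Commute, SemiconjBy, sq, ← mul_assoc x, show z * z * x = z * (z * x * z⁻¹) * z by group,
    mul_left_inj]

end Braid

theorem PresentedGroup.lift_of_eq_one {α : Type*} {rels : Set (FreeGroup α)} {r : FreeGroup α}
    (hr : r ∈ rels) : FreeGroup.lift (of (rels := rels)) r = 1 := by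
  rw [← FreeGroup.lift_unique (f := of) (mk rels) fun _ => rfl, one_of_mem hr]

theorem lift_relsG_eq_one_iff {M : Type*} [Group M] (f : Fin 3 → M) :
    (∀ r ∈ relsG, FreeGroup.lift f r = 1) ↔ f 1 * f 2 = f 2 * f 0 ∧ f 0 * f 2 = f 2 * f 1 := by
  simp only [relsG, Set.mem_insert_iff, Set.mem_singleton_iff, forall_eq_or_imp, forall_eq,
    map_mul, map_inv, FreeGroup.lift_apply_of, mul_assoc _ _ (f 2)⁻¹, ← mul_inv_rev,
    mul_inv_eq_one]

theorem lift_relsH_eq_one_iff {M : Type*} [Group M] (f : Fin 2 → M) :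
    (∀ r ∈ relsH, FreeGroup.lift f r = 1) ↔ f 0 * f 1 * f 0 * f 1 = f 1 * f 0 * f 1 * f 0 := by
  simp only [relsH, Set.mem_singleton_iff, forall_eq, map_mul, map_inv, FreeGroup.lift_apply_of,
    mul_inv_eq_one]

local notation "G" => PresentedGroup relsG
local notation "H" => PresentedGroup relsH

theorem relations_relsG : (of 1 * of 2 : G) = of 2 * of 0 ∧ (of 0 * of 2 : G) = of 2 * of 1 :=
  (lift_relsG_eq_one_iff of).1 fun _ => lift_of_eq_one

theorem of_one_eq_conj_relsG : (of 1 : G) = of 2 * of 0 * (of 2)⁻¹ :=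
  eq_mul_inv_of_mul_eq relations_relsG.1

theorem commute_of_zero_of_two_sq_relsG : Commute (of 0 : G) (of 2 ^ 2) := by
  rw [← mul_eq_mul_conj_iff_commute_sq, ← of_one_eq_conj_relsG]
  exact relations_relsG.2

theorem braid_relsH : (of 0 * of 1 * of 0 * of 1 : H) = of 1 * of 0 * of 1 * of 0 :=
  (lift_relsH_eq_one_iff of).1 fun _ => lift_of_eq_one

def relsHToRelsG : H →* G :=
  toGroup (f := ![of 0, (of 0)⁻¹ * of 2]) <| (lift_relsH_eq_one_iff _).2 <|
    (braid_iff_commute_mul_sq _ _).2 (by simpa using commute_of_zero_of_two_sq_relsG)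

def relsGToRelsH : G →* H :=
  toGroup (f := ![of 0, of 0 * of 1 * of 0 * (of 0 * of 1)⁻¹, of 0 * of 1]) <|
    (lift_relsG_eq_one_iff _).2
      ⟨by simp [mul_assoc],
        (mul_eq_mul_conj_iff_commute_sq _ _).2 ((braid_iff_commute_mul_sq _ _).1 braid_relsH)⟩

theorem relsGToRelsH_comp_relsHToRelsG : relsGToRelsH.comp relsHToRelsG = MonoidHom.id H := by
  ext i
  fin_cases i <;> simp [relsGToRelsH, relsHToRelsG, toGroup.of]

theorem relsHToRelsG_comp_relsGToRelsH : relsHToRelsG.comp relsGToRelsH = MonoidHom.id G := by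
  ext i
  fin_cases i <;> simp [relsGToRelsH, relsHToRelsG, toGroup.of, of_one_eq_conj_relsG]

/-- the group `G = ⟨λ₁, λ₂, λ₃ ∣ λ₂λ₃λ₁⁻¹λ₃⁻¹ = e, λ₁λ₃λ₂⁻¹λ₃⁻¹ = e⟩`
is isomorphic to `H = ⟨a, b ∣ abab = baba⟩`, via an isomorphism induced by
`a ↦ λ₁`, `b ↦ λ₁⁻¹λ₃`. -/
theorem stmt3 :
    ∃ φ : PresentedGroup relsH ≃* PresentedGroup relsG,
      φ (PresentedGroup.of 0) = PresentedGroup.of 0 ∧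
      φ (PresentedGroup.of 1) = (PresentedGroup.of 0)⁻¹ * PresentedGroup.of 2 :=
  ⟨relsHToRelsG.toMulEquiv relsGToRelsH relsGToRelsH_comp_relsHToRelsG
      relsHToRelsG_comp_relsGToRelsH, rfl, rfl⟩
end

section
/- With T₃, T₊ and T₋ as defined in the context (the 7×7 monodromy matrix of a vanishing triangle and the two jump matrices), the matrix identity T₊ · T₋ = T₃ holds over every commutative ring R and for all a, b, c ∈ R. -/
/-- `M v` is the 7×7 matrix whose first column is `v` and whose remaining
columns are the standard basis columns. -/
def M {R : Type*} [CommRing R] (v : Fin 7 → R) : Matrix (Fin 7) (Fin 7) R :=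
  Matrix.of fun i j => if j = 0 then v i else if i = j then 1 else 0

lemma cons_val_five {α : Type*} {m : ℕ} (x : α) (u : Fin (m+5) → α) :
    Matrix.vecCons x u 5 =
      Matrix.vecHead (Matrix.vecTail (Matrix.vecTail (Matrix.vecTail (Matrix.vecTail u)))) :=
  rfl

lemma cons_val_six {α : Type*} {m : ℕ} (x : α) (u : Fin (m+6) → α) :
    Matrix.vecCons x u 6 =
      Matrix.vecHead (Matrix.vecTail (Matrix.vecTail (Matrix.vecTail
        (Matrix.vecTail (Matrix.vecTail u))))) :=
  rfl

/-- the jump matrices satisfy `T₊ · T₋ = T₃`. -/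
theorem stmt4 {R : Type*} [CommRing R] (a b c : R) :
    M ![1, -1, -1, -1, 1, 1, 1] *
      M ![a*b*c, b, a, c, -(b*c), -(a*b), -(a*c)] =
    M ![a*b*c, b - a*b*c, a - a*b*c, c - a*b*c,
        a*b*c - b*c, a*b*c - a*b, a*b*c - a*c] := by
  ext i j
  simp only [M, Matrix.mul_apply, Matrix.of_apply, Fin.sum_univ_seven]
  fin_cases i <;> fin_cases j <;> simp [cons_val_five, cons_val_six] <;> ring
end

section
/- With T₃ as defined in the context, suppose b' ∈ R satisfies b · b' = 1. Let w be the row vector (1, b', 1, 1, b', b', 1) of length 7 over R and let I be the 7×7 identity matrix. Then w · (T₃ − I) = 0, i.e. the vector w is invariant under right multiplication by T₃. -/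
section

open Matrix

variable {R : Type*} [CommRing R]

theorem M_eq_updateCol_one (v : Fin 7 → R) : M v = updateCol 1 0 v := by
  ext i j
  simp only [M, of_apply, updateCol_apply, one_apply, eq_comm (a := i)]

theorem vecMul_M (w v : Fin 7 → R) : w ᵥ* M v = Function.update w 0 (w ⬝ᵥ v) := by
  rw [M_eq_updateCol_one, vecMul_updateCol, vecMul_one]

theorem vecMul_M_sub_one_eq_zero_iff (w v : Fin 7 → R) :
    w ᵥ* (M v - 1) = 0 ↔ w ⬝ᵥ v = w 0 := by
  rw [vecMul_sub, vecMul_one, vecMul_M, sub_eq_zero, Function.update_eq_self_iff]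

end

/-- if `b · b' = 1`, then the row vector
`w = (1, b', 1, 1, b', b', 1)` satisfies `w · (T₃ − I) = 0`, i.e. `w` is
invariant under right multiplication by the triangle monodromy matrix `T₃`. -/
theorem stmt6 {R : Type*} [CommRing R] (a b c b' : R) (hb : b * b' = 1) :
    Matrix.vecMul ![1, b', 1, 1, b', b', 1]
      (M ![a*b*c, b - a*b*c, a - a*b*c, c - a*b*c,
            a*b*c - b*c, a*b*c - a*b, a*b*c - a*c] - 1) = 0 := by
  rw [vecMul_M_sub_one_eq_zero_iff]
  simp only [dotProduct, Fin.sum_univ_succ, Fin.sum_univ_zero, Matrix.cons_val_zero,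
    Matrix.cons_val_succ]
  linear_combination (a * c - a - c + 1) * hb
end

section
/- With Tλ+, Tλ0, Tλ− and Tλ3 as defined in the context (the 8×8 monodromy matrices for two lines and a parabola), the identity Tλ+ · Tλ0 · Tλ− = Tλ3 holds over every commutative ring R and for all a, b, c ∈ R. -/
set_option maxHeartbeats 1000000

/-- `M₁ v`: 8×8 matrix with first column `v`, remaining columns standard. -/
def M1 {R : Type*} [CommRing R] (v : Fin 8 → R) : Matrix (Fin 8) (Fin 8) R :=
  Matrix.of fun i j => if j = 0 then v i else if i = j then 1 else 0

/-- `M₂ v`: 8×8 matrix with second column `v`, remaining columns standard. -/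
def M2 {R : Type*} [CommRing R] (v : Fin 8 → R) : Matrix (Fin 8) (Fin 8) R :=
  Matrix.of fun i j => if j = 1 then v i else if i = j then 1 else 0

/-- `M₁₂ v w`: 8×8 matrix with first column `v`, second column `w`,
remaining columns standard. -/
def M12 {R : Type*} [CommRing R] (v w : Fin 8 → R) : Matrix (Fin 8) (Fin 8) R :=
  Matrix.of fun i j => if j = 0 then v i else if j = 1 then w i
    else if i = j then 1 else 0


private lemma vec8_5 {R : Type*} (x0 x1 x2 x3 x4 x5 x6 x7 : R) :
    (![x0,x1,x2,x3,x4,x5,x6,x7]) (5:Fin 8) = x5 := rfl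
private lemma vec8_6 {R : Type*} (x0 x1 x2 x3 x4 x5 x6 x7 : R) :
    (![x0,x1,x2,x3,x4,x5,x6,x7]) (6:Fin 8) = x6 := rfl
private lemma vec8_7 {R : Type*} (x0 x1 x2 x3 x4 x5 x6 x7 : R) :
    (![x0,x1,x2,x3,x4,x5,x6,x7]) (7:Fin 8) = x7 := rfl

/-- the identity `Tλ₊ · Tλ₀ · Tλ₋ = Tλ₃` for the 8×8 monodromy
matrices of two lines and a parabola. -/
theorem stmt7 {R : Type*} [CommRing R] (a b c : R) :
    M1 ![1, -1, -1, -1, 1, 1, 1, 0] *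
      M2 ![-(a*b), -(a*b), 0, 0, a + a*b, b + a*b, 0, -(a*b)] *
      M1 ![a*b*c, c, b, a, -(a*c), -(b*c), -(a*b), 0] =
    M12 ![0, -(a*b*c), b, a, a*b*c, a*b*c, -(a*b), -(a*b*c)]
        ![-(a*b), 0, a*b, a*b, a, b, -(a*b), -(a*b)] := by
  ext i j
  fin_cases i <;> fin_cases j <;>
    simp [M1, M2, M12, Matrix.mul_apply, Fin.sum_univ_eight, Matrix.cons_val_succ, vec8_5, vec8_6, vec8_7]
end

section
/- With T_A, T₁₊, T₂₊ as defined in the context (the 8×8 monodromy matrices for two lines and a circle), suppose S is an 8×8 matrix over R with T_A · S = I and S · T_A = I, and set T̃₁₊ := T₁₊ · S and T̃₂₊ := T₂₊ · S. Then the additive crossing identity holds: I + T̃₁₊ · T̃₂₊ = T̃₁₊ + T̃₂₊; equivalently, (T̃₁₊ − I) · (T̃₂₊ − I) = 0. -/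
/-- `T_A`, monodromy matrix for two lines and a circle. -/
def TA {R : Type*} [CommRing R] (a b c : R) : Matrix (Fin 8) (Fin 8) R :=
  M1 ![a*b*c, 1 - b*c, c - 1, 1 - a*c, c - a*b*c, b*c - c, 0, a*c - c]

/-- `T₁₊`: first column `(0, 1, c, −ac, c, −c, −c, ac)`, fourth column
`(−abc, bc, 1, 0, abc, −bc, −c, c)`, remaining columns standard. -/
def T1p {R : Type*} [CommRing R] (a b c : R) : Matrix (Fin 8) (Fin 8) R :=
  Matrix.of fun i j =>
    if j = 0 then ![0, 1, c, -(a*c), c, -c, -c, a*c] i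
    else if j = 3 then ![-(a*b*c), b*c, 1, 0, a*b*c, -(b*c), -c, c] i
    else if i = j then 1 else 0

/-- `T₂₊`: first column `(0, −bc, c, 1, c, bc, −c, −c)`, second column
`(−abc, 0, 1, ac, abc, c, −c, −ac)`, remaining columns standard. -/
def T2p {R : Type*} [CommRing R] (a b c : R) : Matrix (Fin 8) (Fin 8) R :=
  Matrix.of fun i j =>
    if j = 0 then ![0, -(b*c), c, 1, c, b*c, -c, -c] i
    else if j = 1 then ![-(a*b*c), 0, 1, a*c, a*b*c, c, -c, -(a*c)] i
    else if i = j then 1 else 0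


lemma vec8_five {α : Type*} (x0 x1 x2 x3 x4 x5 x6 x7 : α) :
    ![x0,x1,x2,x3,x4,x5,x6,x7] 5 = x5 := rfl

lemma vec8_six {α : Type*} (x0 x1 x2 x3 x4 x5 x6 x7 : α) :
    ![x0,x1,x2,x3,x4,x5,x6,x7] 6 = x6 := rfl

lemma vec8_seven {α : Type*} (x0 x1 x2 x3 x4 x5 x6 x7 : α) :
    ![x0,x1,x2,x3,x4,x5,x6,x7] 7 = x7 := rfl

/-- Auxiliary matrix: columns 0 and 1 equal `w`, others zero. -/
def Yaux {R : Type*} [CommRing R] (b c : R) : Matrix (Fin 8) (Fin 8) R :=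
  Matrix.of fun i j =>
    if j = 0 ∨ j = 1 then ![-1, -(b*c), c, 1, c, b*c, -c, -c] i else 0

lemma key1 {R : Type*} [CommRing R] (a b c : R) :
    TA a b c * Yaux b c = T2p a b c - TA a b c := by
  ext i j
  fin_cases i <;> fin_cases j <;>
    simp [Matrix.mul_apply, Fin.sum_univ_eight, TA, T1p, T2p, M1, Yaux,
      Matrix.sub_apply, vec8_five, vec8_six, vec8_seven] <;> ring

lemma key2 {R : Type*} [CommRing R] (a b c : R) :
    (T1p a b c - TA a b c) * Yaux b c = 0 := by
  ext i j
  fin_cases i <;> fin_cases j <;>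
    simp [Matrix.mul_apply, Fin.sum_univ_eight, TA, T1p, T2p, M1, Yaux,
      Matrix.sub_apply, vec8_five, vec8_six, vec8_seven]

/-- if `S` is a two-sided inverse of `T_A` and
`T̃₁₊ = T₁₊ · S`, `T̃₂₊ = T₂₊ · S`, then the additive crossing identity
`I + T̃₁₊ · T̃₂₊ = T̃₁₊ + T̃₂₊` holds; equivalently
`(T̃₁₊ − I) · (T̃₂₊ − I) = 0`. -/
theorem stmt12 {R : Type*} [CommRing R] (a b c : R)
    (S : Matrix (Fin 8) (Fin 8) R)
    (h1 : TA a b c * S = 1) (h2 : S * TA a b c = 1) :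
    1 + (T1p a b c * S) * (T2p a b c * S) = T1p a b c * S + T2p a b c * S ∧
    (T1p a b c * S - 1) * (T2p a b c * S - 1) = 0 := by
  have key : (T1p a b c * S - 1) * (T2p a b c * S - 1) = 0 := by
    have e1 : T1p a b c * S - 1 = (T1p a b c - TA a b c) * S := by
      rw [Matrix.sub_mul, h1]
    have e2 : T2p a b c * S - 1 = (T2p a b c - TA a b c) * S := by
      rw [Matrix.sub_mul, h1]
    rw [e1, e2, ← key1 a b c]
    calc (T1p a b c - TA a b c) * S * (TA a b c * Yaux b c * S)
        = (T1p a b c - TA a b c) * (S * TA a b c) * Yaux b c * S := by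
          noncomm_ring
      _ = 0 := by rw [h2, Matrix.mul_one, key2, Matrix.zero_mul]
  refine ⟨?_, key⟩
  have expand : (T1p a b c * S - 1) * (T2p a b c * S - 1)
      = T1p a b c * S * (T2p a b c * S) - T1p a b c * S - T2p a b c * S + 1 := by
    noncomm_ring
  rw [expand] at key
  calc 1 + T1p a b c * S * (T2p a b c * S)
      = (T1p a b c * S * (T2p a b c * S) - T1p a b c * S - T2p a b c * S + 1)
        + (T1p a b c * S + T2p a b c * S) := by abel
    _ = T1p a b c * S + T2p a b c * S := by rw [key, zero_add]
end
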